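/- arXiv:1411.3014 — 5 statements merged into one kernel-verified Lean document; each statement's English description precedes it below -/
import Mathlib

section
/- The set of values of Euler's totient function contains arbitrarily large gaps: for every positive integer N there exists a positive integer a such that no integer in the interval (a, a + N] is a value of Euler's totient function. -/
/-!
The totient values have density zero (Erdős, Pillai), whereas a set meeting every interval
`(a, a + N]` has density at least `1 / N`. A totient value `m = φ n` not divisible by `2 ^ k`
forces `n` to have at most `k` prime factors, and then `n ≤ 2 ^ k * m`. Integers with at most `k`
prime factors have density zero: since `∑ 1 / p` diverges, there are `k + 1` pairwise disjoint
finite sets of primes with `∏ (1 - 1 / p) ≤ ε`, and such an integer is coprime to the product of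
one of them, which confines it to a set of density at most `ε`.
-/

open Finset Function

theorem Finset.card_le_card_of_pairwiseDisjoint_of_inter_nonempty {ι α : Type*} [DecidableEq α]
    {t : Finset ι} {s : ι → Finset α} {A : Finset α} (hs : (t : Set ι).PairwiseDisjoint s)
    (h : ∀ i ∈ t, (s i ∩ A).Nonempty) : #t ≤ #A :=
  calc #t ≤ #(t.biUnion fun i => s i ∩ A) :=
        card_le_card_biUnion (hs.mono fun _ => inter_subset_left) h
    _ ≤ #A := card_le_card (biUnion_subset.mpr fun _ _ => inter_subset_right)

theorem Real.prod_one_sub_le_exp_neg_sum {ι : Type*} (s : Finset ι) {x : ι → ℝ}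
    (hx : ∀ i ∈ s, x i ≤ 1) : ∏ i ∈ s, (1 - x i) ≤ Real.exp (-∑ i ∈ s, x i) := by
  rw [← sum_neg_distrib, Real.exp_sum]
  exact prod_le_prod (fun i hi => sub_nonneg.mpr (hx i hi)) fun i _ => Real.one_sub_le_exp_neg _

namespace Nat

theorem exists_le_sum_inv_primes_Ico (M : ℕ) (L : ℝ) :
    ∃ M' ≥ M, L ≤ ∑ p ∈ Ico M M' with p.Prime, (p : ℝ)⁻¹ := by
  set g : ℕ → ℝ := fun n => if n.Prime then (n : ℝ)⁻¹ else 0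
  have hg : Filter.Tendsto (fun n => ∑ i ∈ range n, g i) Filter.atTop Filter.atTop := by
    refine (not_summable_iff_tendsto_nat_atTop_of_nonneg fun n => ?_).mp ?_
    · positivity
    · convert not_summable_one_div_on_primes using 2
      ext n
      simp [g, Set.indicator_apply]
  obtain ⟨M', hM'L, hM'M⟩ := ((Filter.tendsto_atTop.mp hg (L + ∑ i ∈ range M, g i)).and
    (Filter.eventually_ge_atTop M)).exists
  refine ⟨M', hM'M, ?_⟩
  rw [← sum_range_add_sum_Ico _ hM'M] at hM'L
  rw [sum_filter]
  linarith

theorem exists_pairwise_disjoint_primes_prod_one_sub_inv_le {δ : ℝ} (hδ : 0 < δ) :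
    ∃ B : ℕ → Finset ℕ, Pairwise (Disjoint on B) ∧
      ∀ i, (∀ p ∈ B i, p.Prime) ∧ ∏ p ∈ B i, (1 - (p : ℝ)⁻¹) ≤ δ := by
  choose f hfM hf using fun M => exists_le_sum_inv_primes_Ico M (-Real.log δ)
  set M : ℕ → ℕ := fun i => f^[i] 0
  have hM : Monotone M := monotone_nat_of_le_succ fun i => by
    simp only [M, Function.iterate_succ_apply']; exact hfM _
  refine ⟨fun i => {p ∈ Ico (M i) (M (i + 1)) | p.Prime}, ?_, fun i => ⟨?_, ?_⟩⟩
  · refine fun i j hij => disjoint_filter_filter ?_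
    rw [← disjoint_coe, coe_Ico, coe_Ico]
    exact hM.pairwise_disjoint_on_Ico_succ hij
  · exact fun p hp => (mem_filter.mp hp).2
  · have hle : ∀ p ∈ {p ∈ Ico (M i) (M (i + 1)) | p.Prime}, (p : ℝ)⁻¹ ≤ 1 := fun p hp =>
      inv_le_one_of_one_le₀ (one_le_cast.mpr (mem_filter.mp hp).2.one_le)
    calc _ ≤ Real.exp (-∑ p ∈ Ico (M i) (M (i + 1)) with p.Prime, (p : ℝ)⁻¹) :=
          Real.prod_one_sub_le_exp_neg_sum _ hle
      _ ≤ Real.exp (-(-Real.log δ)) := by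
          gcongr
          simpa only [M, Function.iterate_succ_apply'] using hf (M i)
      _ = δ := by rw [neg_neg, Real.exp_log hδ]

theorem cast_totient_prod_primes {s : Finset ℕ} (hs : ∀ p ∈ s, p.Prime) :
    (φ (∏ p ∈ s, p) : ℝ) = (∏ p ∈ s, p) * ∏ p ∈ s, (1 - (p : ℝ)⁻¹) := by
  have := totient_eq_mul_prod_factors (∏ p ∈ s, p)
  rw [primeFactors_prod hs] at this
  have := congrArg (Rat.cast : ℚ → ℝ) this
  push_cast at this ⊢
  exact this

theorem card_coprime_prod_primes_Icc_le {s : Finset ℕ} (hs : ∀ p ∈ s, p.Prime) (y : ℕ) :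
    (#{n ∈ Icc 1 y | (∏ p ∈ s, p).Coprime n} : ℝ) ≤
      (∏ p ∈ s, (1 - (p : ℝ)⁻¹)) * y + ∏ p ∈ s, p := by
  set P := ∏ p ∈ s, p
  have hP : 0 < P := prod_pos fun p hp => (hs p hp).pos
  have hsieve : #{n ∈ Icc 1 y | P.Coprime n} ≤ φ P * (y / P + 1) := by
    simpa only [add_comm 1 y, Ico_add_one_right_eq_Icc] using Ico_filter_coprime_le 1 y hP.ne'
  have hdiv : ((y / P : ℕ) : ℝ) ≤ y / P := cast_div_le
  calc (#{n ∈ Icc 1 y | P.Coprime n} : ℝ) ≤ φ P * (y / P : ℕ) + φ P := by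
        exact_mod_cast hsieve.trans_eq (mul_add_one _ _)
    _ ≤ P * (∏ p ∈ s, (1 - (p : ℝ)⁻¹)) * (y / P) + P := by
        rw [← cast_totient_prod_primes hs]
        gcongr
        exact totient_le P
    _ = (∏ p ∈ s, (1 - (p : ℝ)⁻¹)) * y + P := by
        field_simp

theorem inter_primeFactors_nonempty_of_not_coprime_prod {s : Finset ℕ} (hs : ∀ p ∈ s, p.Prime)
    {n : ℕ} (hn : n ≠ 0) (h : ¬ (∏ p ∈ s, p).Coprime n) : (s ∩ n.primeFactors).Nonempty := by
  obtain ⟨p, hps, hpn⟩ : ∃ p ∈ s, ¬ p.Coprime n := by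
    by_contra! hcop
    exact h (Coprime.prod_left hcop)
  exact ⟨p, mem_inter.mpr ⟨hps, mem_primeFactors.mpr
    ⟨hs p hps, ((hs p hps).dvd_iff_not_coprime).mpr hpn, hn⟩⟩⟩

theorem exists_const_card_few_primeFactors_le (k : ℕ) {ε : ℝ} (hε : 0 < ε) :
    ∃ C : ℝ, ∀ y : ℕ, (#{n ∈ Icc 1 y | #n.primeFactors ≤ k} : ℝ) ≤ ε * y + C := by
  obtain ⟨B, hdisj, hB⟩ :=
    exists_pairwise_disjoint_primes_prod_one_sub_inv_le (δ := ε / (k + 1)) (by positivity)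
  refine ⟨∑ i ∈ range (k + 1), ∏ p ∈ B i, (p : ℝ), fun y => ?_⟩
  -- having at most `k` prime factors, `n` misses one of the `k + 1` disjoint blocks `B i`
  have hcover : {n ∈ Icc 1 y | #n.primeFactors ≤ k} ⊆
      (range (k + 1)).biUnion fun i => {n ∈ Icc 1 y | (∏ p ∈ B i, p).Coprime n} := by
    intro n hn
    obtain ⟨hny, hk⟩ := mem_filter.mp hn
    simp only [mem_biUnion, mem_filter, mem_range]
    by_contra! hnot
    have hmeet : ∀ i ∈ range (k + 1), (B i ∩ n.primeFactors).Nonempty := fun i hi =>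
      inter_primeFactors_nonempty_of_not_coprime_prod (hB i).1
        (by rw [mem_Icc] at hny; omega) (hnot i (mem_range.mp hi) hny)
    have := card_le_card_of_pairwiseDisjoint_of_inter_nonempty (hdisj.set_pairwise _) hmeet
    rw [card_range] at this
    omega
  calc (#{n ∈ Icc 1 y | #n.primeFactors ≤ k} : ℝ)
      ≤ ∑ i ∈ range (k + 1), (#{n ∈ Icc 1 y | (∏ p ∈ B i, p).Coprime n} : ℝ) := by
        exact_mod_cast (card_le_card hcover).trans card_biUnion_le
    _ ≤ ∑ i ∈ range (k + 1), (ε / (k + 1) * y + ∏ p ∈ B i, (p : ℝ)) := by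
        gcongr with i
        refine (card_coprime_prod_primes_Icc_le (hB i).1 y).trans ?_
        push_cast
        gcongr
        exact (hB i).2
    _ = ε * y + ∑ i ∈ range (k + 1), ∏ p ∈ B i, (p : ℝ) := by
        rw [sum_add_distrib, sum_const, card_range, nsmul_eq_mul]
        field_simp
        push_cast
        ring

theorem two_pow_card_primeFactors_erase_two_dvd_totient (n : ℕ) :
    2 ^ #(n.primeFactors.erase 2) ∣ φ n := by
  rcases eq_or_ne n 0 with rfl | hn
  · simp
  rw [totient_eq_prod_factorization hn, Finsupp.prod, support_factorization, ← prod_const]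
  refine (prod_dvd_prod_of_dvd _ _ fun p hp => ?_).trans
    (prod_dvd_prod_of_subset _ _ _ (erase_subset 2 _))
  have hodd := (prime_of_mem_primeFactors (mem_of_mem_erase hp)).odd_of_ne_two
    (ne_of_mem_erase hp)
  exact (Nat.Odd.sub_odd hodd odd_one).two_dvd.mul_left _

theorem card_primeFactors_le_of_not_two_pow_dvd_totient {n k : ℕ} (h : ¬ 2 ^ k ∣ φ n) :
    #n.primeFactors ≤ k := by
  have hlt : #(n.primeFactors.erase 2) < k := by
    by_contra! hle
    exact h ((pow_dvd_pow 2 hle).trans (two_pow_card_primeFactors_erase_two_dvd_totient n))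
  have := pred_card_le_card_erase (s := n.primeFactors) (a := 2)
  omega

theorem le_two_pow_card_primeFactors_mul_totient (n : ℕ) :
    n ≤ 2 ^ #n.primeFactors * φ n := by
  refine Nat.le_of_mul_le_mul_right ?_ (prod_pos fun p (hp : p ∈ n.primeFactors) =>
    pos_of_mem_primeFactors hp)
  calc n * ∏ p ∈ n.primeFactors, p ≤ n * ∏ p ∈ n.primeFactors, 2 * (p - 1) := by
        gcongr with p hp
        have := (prime_of_mem_primeFactors hp).two_le
        omega
    _ = 2 ^ #n.primeFactors * φ n * ∏ p ∈ n.primeFactors, p := by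
        rw [prod_mul_distrib, prod_const, mul_assoc, totient_mul_prod_primeFactors]
        ring

open scoped Classical in
theorem card_totient_values_le (k x : ℕ) :
    #{m ∈ Icc 1 x | m ∈ Set.range φ} ≤
      x / 2 ^ k + #{n ∈ Icc 1 (2 ^ k * x) | #n.primeFactors ≤ k} := by
  have hsub : {m ∈ Icc 1 x | m ∈ Set.range φ} ⊆ {m ∈ Icc 1 x | 2 ^ k ∣ m} ∪
      image φ {n ∈ Icc 1 (2 ^ k * x) | #n.primeFactors ≤ k} := by
    intro m hm
    obtain ⟨hmx, n, rfl⟩ := mem_filter.mp hm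
    rw [mem_union, mem_filter, mem_image]
    by_cases hdvd : 2 ^ k ∣ φ n
    · exact Or.inl ⟨hmx, hdvd⟩
    refine Or.inr ⟨n, mem_filter.mpr ⟨mem_Icc.mpr ⟨?_, ?_⟩, ?_⟩, rfl⟩
    · rw [mem_Icc] at hmx
      exact totient_pos.mp hmx.1
    · calc n ≤ 2 ^ #n.primeFactors * φ n := le_two_pow_card_primeFactors_mul_totient n
        _ ≤ 2 ^ k * x := by
          gcongr
          · exact one_le_two
          · exact card_primeFactors_le_of_not_two_pow_dvd_totient hdvd
          · exact (mem_Icc.mp hmx).2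
    · exact card_primeFactors_le_of_not_two_pow_dvd_totient hdvd
  have hdvd_card : #{m ∈ Icc 1 x | 2 ^ k ∣ m} = x / 2 ^ k := Ioc_filter_dvd_card_eq_div x _
  calc _ ≤ _ := card_le_card hsub
    _ ≤ _ := card_union_le _ _
    _ ≤ _ := by grw [hdvd_card, Finset.card_image_le]

open scoped Classical in
theorem exists_const_card_totient_values_le {ε : ℝ} (hε : 0 < ε) :
    ∃ C : ℝ, ∀ x : ℕ, (#{m ∈ Icc 1 x | m ∈ Set.range φ} : ℝ) ≤ ε * x + C := by
  obtain ⟨k, hk⟩ := pow_unbounded_of_one_lt (2 / ε) one_lt_two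
  have h2k : (0 : ℝ) < 2 ^ k := by positivity
  obtain ⟨C, hC⟩ := exists_const_card_few_primeFactors_le k (ε := ε / (2 * 2 ^ k)) (by positivity)
  refine ⟨C, fun x => ?_⟩
  have hdiv : ((x / 2 ^ k : ℕ) : ℝ) ≤ ε / 2 * x := by
    have hεk : 2 < 2 ^ k * ε := (div_lt_iff₀ hε).mp hk
    calc ((x / 2 ^ k : ℕ) : ℝ) ≤ x / 2 ^ k := by exact_mod_cast cast_div_le
      _ ≤ ε / 2 * x := by
        rw [div_le_iff₀ h2k]
        nlinarith [(cast_nonneg x : (0 : ℝ) ≤ x)]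
  calc (#{m ∈ Icc 1 x | m ∈ Set.range φ} : ℝ)
      ≤ ((x / 2 ^ k : ℕ) : ℝ) + #{n ∈ Icc 1 (2 ^ k * x) | #n.primeFactors ≤ k} := by
        exact_mod_cast card_totient_values_le k x
    _ ≤ ε / 2 * x + (ε / (2 * 2 ^ k) * ((2 ^ k * x : ℕ) : ℝ) + C) := by
        linarith [hC (2 ^ k * x)]
    _ = ε * x + C := by
        push_cast
        field_simp
        ring

end Nat

theorem le_card_filter_Icc_mul_of_forall_exists_mem_Ioc {S : Set ℕ} [DecidablePred (· ∈ S)]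
    {N : ℕ} (hN : 0 < N) (hS : ∀ a, 0 < a → ∃ m ∈ S, a < m ∧ m ≤ a + N) (K : ℕ) :
    K ≤ #{m ∈ Icc 1 ((K + 1) * N) | m ∈ S} := by
  induction K with
  | zero => exact Nat.zero_le _
  | succ K ih =>
    obtain ⟨m, hmS, hlt, hle⟩ := hS ((K + 1) * N) (by positivity)
    have hsub : insert m {m ∈ Icc 1 ((K + 1) * N) | m ∈ S} ⊆
        {m ∈ Icc 1 ((K + 1 + 1) * N) | m ∈ S} := by
      refine insert_subset (mem_filter.mpr ⟨mem_Icc.mpr ⟨by omega, by linarith⟩, hmS⟩) ?_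
      refine filter_subset_filter _ (Icc_subset_Icc_right ?_)
      gcongr
      omega
    have hnew : m ∉ {m ∈ Icc 1 ((K + 1) * N) | m ∈ S} := fun hm =>
      (mem_Icc.mp (mem_filter.mp hm).1).2.not_gt hlt
    calc K + 1 ≤ #(insert m {m ∈ Icc 1 ((K + 1) * N) | m ∈ S}) := by
          rw [card_insert_of_notMem hnew]; omega
      _ ≤ _ := card_le_card hsub

/-- The set of values of Euler's totient function contains arbitrarily large gaps: for every
positive integer `N` there exists a positive integer `a` such that no integer in the interval
`(a, a + N]` is a value of Euler's totient function. -/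
theorem totient_values_arbitrarily_large_gaps :
    ∀ N : ℕ, 0 < N → ∃ a : ℕ, 0 < a ∧
      ∀ m : ℕ, a < m → m ≤ a + N → ¬ ∃ n : ℕ, 1 ≤ n ∧ Nat.totient n = m := by
  intro N hN
  by_contra! hnogap
  classical
  have hmeet : ∀ a, 0 < a → ∃ m ∈ Set.range Nat.totient, a < m ∧ m ≤ a + N := fun a ha => by
    obtain ⟨m, hlt, hle, n, -, rfl⟩ := hnogap a ha
    exact ⟨_, ⟨n, rfl⟩, hlt, hle⟩
  obtain ⟨C, hC⟩ := Nat.exists_const_card_totient_values_le (ε := 1 / (2 * N)) (by positivity)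
  obtain ⟨K, hK⟩ := exists_nat_gt (2 * C + 1)
  have hlower : (K : ℝ) ≤ #{m ∈ Icc 1 ((K + 1) * N) | m ∈ Set.range Nat.totient} := by
    exact_mod_cast le_card_filter_Icc_mul_of_forall_exists_mem_Ioc hN hmeet K
  have hupper := hC ((K + 1) * N)
  have hscale : 1 / (2 * N) * (((K + 1) * N : ℕ) : ℝ) = (K + 1) / 2 := by
    have hNR : (N : ℝ) ≠ 0 := by exact_mod_cast hN.ne'
    push_cast
    field_simp
  linarith
end

section
/- For every fixed positive integer k and every real c > 0, the number of positive integers n ≤ x with exactly k distinct prime factors is smaller than c·x whenever x is sufficiently large; that is, ρ_k(x) = o(x) as x → ∞. -/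
/-!
For a finite set `S` of primes write `ω_S(n) = #{p ∈ S | p ∣ n}`. If `n` has at most `k` prime
factors then `ω_S(n) ≤ k`, so `1 ≤ 2^k 2^{-ω_S(n)}`. Expanding
`2^{-ω_S(n)} = ∏_{p ∈ S} (1 - [p ∣ n]/2)` over subsets `t ⊆ S` and counting the multiples of
`∏_{p ∈ t} p` up to `N` gives `∑_{n ≤ N} 2^{-ω_S(n)} ≤ N ∏_{p ∈ S} (1 - 1/(2p)) + (3/2)^{#S}`.
Since `∑ 1/p` diverges, the product can be made smaller than any `ε > 0`.
-/

open Finset Filter Real Topology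

theorem mul_natCast_div_le_mul_div_add_abs (c : ℝ) (N d : ℕ) :
    c * ((N / d : ℕ) : ℝ) ≤ c * (N / d) + |c| := by
  have h₁ : ((N / d : ℕ) : ℝ) ≤ N / d := Nat.cast_div_le
  have h₂ : (N / d : ℝ) - 1 < (N / d : ℕ) := by
    rw [← Nat.floor_div_eq_div (K := ℝ)]
    exact Nat.sub_one_lt_floor _
  cases abs_cases c <;> nlinarith

theorem Nat.prod_primes_dvd_iff {t : Finset ℕ} (ht : ∀ p ∈ t, p.Prime) {n : ℕ} :
    ∏ p ∈ t, p ∣ n ↔ ∀ p ∈ t, p ∣ n :=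
  ⟨fun h _ hp => (dvd_prod_of_mem _ hp).trans h,
    Finset.prod_primes_dvd n fun p hp => (ht p hp).prime⟩

section Sieve

variable {S : Finset ℕ}

theorem one_sub_pow_card_filter_dvd_eq_sum (hS : ∀ p ∈ S, p.Prime) (δ : ℝ) (n : ℕ) :
    (1 - δ) ^ #{p ∈ S | p ∣ n} =
      ∑ t ∈ S.powerset, if ∏ p ∈ t, p ∣ n then (-δ) ^ #t else 0 := by
  calc (1 - δ) ^ #{p ∈ S | p ∣ n} = ∏ p ∈ S, (1 + if p ∣ n then -δ else 0) := by
        rw [← prod_const, prod_filter]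
        exact prod_congr rfl fun p _ => by split_ifs <;> ring
    _ = ∑ t ∈ S.powerset, ∏ p ∈ t, if p ∣ n then -δ else 0 := prod_one_add S
    _ = _ := sum_congr rfl fun t ht => by
        rw [prod_ite_zero, prod_const]
        exact if_congr (Nat.prod_primes_dvd_iff fun p hp => hS p (mem_powerset.1 ht hp)).symm rfl rfl

theorem sum_one_sub_pow_card_filter_dvd_le (hS : ∀ p ∈ S, p.Prime) (δ : ℝ) (N : ℕ) :
    ∑ n ∈ Ioc 0 N, (1 - δ) ^ #{p ∈ S | p ∣ n} ≤
      N * ∏ p ∈ S, (1 - δ / p) + (1 + |δ|) ^ #S := by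
  have hcount : ∀ t ∈ S.powerset, ∑ n ∈ Ioc 0 N, (if ∏ p ∈ t, p ∣ n then (-δ) ^ #t else 0 : ℝ) =
      (-δ) ^ #t * (N / ∏ p ∈ t, p : ℕ) := fun t _ => by
    rw [← sum_filter, sum_const, Nat.Ioc_filter_dvd_card_eq_div, nsmul_eq_mul, mul_comm]
  calc ∑ n ∈ Ioc 0 N, (1 - δ) ^ #{p ∈ S | p ∣ n}
      = ∑ t ∈ S.powerset, (-δ) ^ #t * (N / ∏ p ∈ t, p : ℕ) := by
        simp_rw [one_sub_pow_card_filter_dvd_eq_sum hS]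
        rw [sum_comm]
        exact sum_congr rfl hcount
    _ ≤ ∑ t ∈ S.powerset, ((-δ) ^ #t * (N / ∏ p ∈ t, (p : ℝ)) + |δ| ^ #t) := by
        gcongr with t
        simpa [abs_pow] using mul_natCast_div_le_mul_div_add_abs ((-δ) ^ #t) N (∏ p ∈ t, p)
    _ = N * ∏ p ∈ S, (1 - δ / p) + (1 + |δ|) ^ #S := by
        have hmain : ∏ p ∈ S, (1 - δ / p) = ∑ t ∈ S.powerset, (-δ) ^ #t / ∏ p ∈ t, (p : ℝ) := by
          simp_rw [sub_eq_add_neg (1 : ℝ), ← neg_div, prod_one_add, prod_div_distrib, prod_const]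
        have herr : (1 + |δ|) ^ #S = ∑ t ∈ S.powerset, |δ| ^ #t := by
          rw [← prod_const, prod_one_add]
          simp_rw [prod_const]
        rw [sum_add_distrib, hmain, herr, mul_sum]
        exact congrArg₂ _ (sum_congr rfl fun t _ => by ring) rfl

theorem card_filter_card_primeFactors_le (hS : ∀ p ∈ S, p.Prime) (k N : ℕ) :
    (#{n ∈ Ioc 0 N | #n.primeFactors ≤ k} : ℝ) ≤
      2 ^ k * (N * ∏ p ∈ S, (1 - 2⁻¹ / (p : ℝ)) + (3 / 2) ^ #S) := by
  have hweight : ∀ n ∈ {n ∈ Ioc 0 N | #n.primeFactors ≤ k},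
      1 ≤ (2 : ℝ) ^ k * (1 - 2⁻¹) ^ #{p ∈ S | p ∣ n} := by
    intro n hn
    obtain ⟨hn0, hnk⟩ := mem_filter.1 hn
    have hsub : {p ∈ S | p ∣ n} ⊆ n.primeFactors := fun p hp =>
      Nat.mem_primeFactors.2 ⟨hS p (mem_filter.1 hp).1, (mem_filter.1 hp).2, (mem_Ioc.1 hn0).1.ne'⟩
    calc (1 : ℝ) = 2 ^ k * (1 - 2⁻¹) ^ k := by rw [← mul_pow]; norm_num
      _ ≤ 2 ^ k * (1 - 2⁻¹) ^ #{p ∈ S | p ∣ n} := by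
        gcongr 2 ^ k * ?_
        exact pow_le_pow_of_le_one (by norm_num) (by norm_num) ((card_le_card hsub).trans hnk)
  calc (#{n ∈ Ioc 0 N | #n.primeFactors ≤ k} : ℝ)
      = ∑ n ∈ Ioc 0 N with #n.primeFactors ≤ k, 1 := by rw [sum_const, nsmul_one]
    _ ≤ ∑ n ∈ Ioc 0 N with #n.primeFactors ≤ k, 2 ^ k * (1 - 2⁻¹) ^ #{p ∈ S | p ∣ n} :=
        sum_le_sum hweight
    _ ≤ ∑ n ∈ Ioc 0 N, 2 ^ k * (1 - 2⁻¹) ^ #{p ∈ S | p ∣ n} :=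
        sum_le_sum_of_subset_of_nonneg (filter_subset _ _) fun _ _ _ => by positivity
    _ ≤ 2 ^ k * (N * ∏ p ∈ S, (1 - 2⁻¹ / (p : ℝ)) + (3 / 2) ^ #S) := by
        rw [← mul_sum]
        gcongr
        have h := sum_one_sub_pow_card_filter_dvd_le hS 2⁻¹ N
        rwa [show (1 : ℝ) + |2⁻¹| = 3 / 2 by norm_num] at h

end Sieve

theorem tendsto_sum_primesBelow_one_div :
    Tendsto (fun n : ℕ => ∑ p ∈ n.primesBelow, 1 / (p : ℝ)) atTop atTop := by
  refine ((not_summable_iff_tendsto_nat_atTop_of_nonneg fun n =>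
    Set.indicator_nonneg (fun p _ => by positivity) n).1 not_summable_one_div_on_primes).congr
    fun n => ?_
  rw [sum_indicator_eq_sum_filter]
  rfl

theorem exists_prod_one_sub_div_lt {δ ε : ℝ} (hδ : 0 < δ) (hδ2 : δ ≤ 2) (hε : 0 < ε) :
    ∃ S : Finset ℕ, (∀ p ∈ S, p.Prime) ∧ ∏ p ∈ S, (1 - δ / p) < ε := by
  have hexp : Tendsto (fun n : ℕ => exp (-(δ * ∑ p ∈ n.primesBelow, 1 / (p : ℝ)))) atTop (𝓝 0) :=
    tendsto_exp_neg_atTop_nhds_zero.comp (tendsto_sum_primesBelow_one_div.const_mul_atTop hδ)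
  obtain ⟨n, hn⟩ := (hexp.eventually (gt_mem_nhds hε)).exists
  refine ⟨n.primesBelow, fun p => Nat.prime_of_mem_primesBelow, lt_of_le_of_lt ?_ hn⟩
  rw [mul_sum, ← sum_neg_distrib, exp_sum]
  refine prod_le_prod (fun p hp => ?_) fun p _ => ?_
  · have hp : (2 : ℝ) ≤ p := by exact_mod_cast (Nat.prime_of_mem_primesBelow hp).two_le
    rw [sub_nonneg, div_le_one (by linarith)]
    linarith
  · rw [mul_one_div, sub_eq_neg_add]
    exact add_one_le_exp _

theorem count_omega_eq_k_littleO_general (k : ℕ) :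
    ∀ c : ℝ, 0 < c → ∃ X : ℝ, ∀ x : ℝ, X ≤ x →
      ({n : ℕ | 0 < n ∧ (n : ℝ) ≤ x ∧ n.primeFactors.card = k}.ncard : ℝ) < c * x := by
  intro c hc
  obtain ⟨S, hS, hSc⟩ := exists_prod_one_sub_div_lt (δ := 2⁻¹) (by norm_num) (by norm_num)
    (by positivity : 0 < c / 2 ^ (k + 1))
  set E : ℝ := 2 ^ k * (3 / 2) ^ #S
  refine ⟨2 * E / c + 1, fun x hx => ?_⟩
  have hE : 2 * E < c * x := by
    rw [← div_lt_iff₀' hc]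
    linarith
  have hx0 : 0 ≤ x := le_trans (by positivity) hx
  have hsub : {n : ℕ | 0 < n ∧ (n : ℝ) ≤ x ∧ n.primeFactors.card = k} ⊆
      {n ∈ Ioc 0 ⌊x⌋₊ | #n.primeFactors ≤ k} := by
    rintro n ⟨hn0, hnx, rfl⟩
    simpa [hn0] using Nat.le_floor hnx
  calc ({n : ℕ | 0 < n ∧ (n : ℝ) ≤ x ∧ n.primeFactors.card = k}.ncard : ℝ)
      ≤ #{n ∈ Ioc 0 ⌊x⌋₊ | #n.primeFactors ≤ k} := by
        exact_mod_cast (Set.ncard_le_ncard hsub (finite_toSet _)).trans_eq (Set.ncard_coe_finset _)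
    _ ≤ 2 ^ k * (⌊x⌋₊ * ∏ p ∈ S, (1 - 2⁻¹ / (p : ℝ)) + (3 / 2) ^ #S) :=
        card_filter_card_primeFactors_le hS k _
    _ ≤ 2 ^ k * (⌊x⌋₊ * (c / 2 ^ (k + 1)) + (3 / 2) ^ #S) := by gcongr
    _ ≤ 2 ^ k * (x * (c / 2 ^ (k + 1)) + (3 / 2) ^ #S) := by gcongr; exact Nat.floor_le hx0
    _ = c * x / 2 + E := by simp only [E]; rw [pow_succ]; field_simp
    _ < c * x := by linarith

/-- For every fixed positive integer `k` and every real `c > 0`, the number of positive integers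
`n ≤ x` with exactly `k` distinct prime factors is smaller than `c·x` whenever `x` is sufficiently
large; that is, `ρ_k(x) = o(x)` as `x → ∞`. -/
theorem count_omega_eq_k_littleO (k : ℕ) (hk : 1 ≤ k) :
    ∀ c : ℝ, 0 < c → ∃ X : ℝ, ∀ x : ℝ, X ≤ x →
      ({n : ℕ | 0 < n ∧ (n : ℝ) ≤ x ∧ n.primeFactors.card = k}.ncard : ℝ) < c * x :=
  count_omega_eq_k_littleO_general k
end

section
/- There exists a constant C > 0 such that for all real x ≥ 3, the sum of the reciprocals of the primes p ≤ x satisfies Σ_{p ≤ x, p prime} 1/p ≤ C · ln ln x. -/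
/-!
The primes in a dyadic block `(2^k, 2^(k+1)]` all exceed `2^k`, and their product divides the
primorial of `2^(k+1)`, which is at most `4^(2^(k+1))`. Hence the block holds at most `2^(k+2)/k`
primes and contributes at most `4/k` to the sum. Summing over the `K = log₂ x` blocks gives
a harmonic sum, which is `O(log K) = O(log log x)`.
-/

open Finset Real

theorem sum_Ioc_eq_sum_range_sum_Ioc {M : Type*} [AddCommMonoid M] (f : ℕ → M) {a : ℕ → ℕ}
    (ha : Monotone a) (K : ℕ) :
    ∑ n ∈ Ioc (a 0) (a K), f n = ∑ k ∈ range K, ∑ n ∈ Ioc (a k) (a (k + 1)), f n := by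
  induction K with
  | zero => simp
  | succ K ih =>
    rw [sum_range_succ, ← ih, sum_Ioc_consecutive _ (ha K.zero_le) (ha K.le_succ)]

theorem pow_card_primes_Ioc_le (m n : ℕ) : m ^ #{p ∈ Ioc m n | p.Prime} ≤ 4 ^ n :=
  calc m ^ #{p ∈ Ioc m n | p.Prime}
      ≤ ∏ p ∈ Ioc m n with p.Prime, p :=
        pow_card_le_prod _ _ _ fun p hp ↦ (mem_Ioc.mp (mem_filter.mp hp).1).1.le
    _ ≤ primorial n := by
        refine prod_le_prod_of_subset_of_one_le' (fun p hp ↦ ?_) fun p hp _ ↦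
          (mem_filter.mp hp).2.one_lt.le
        simp only [mem_filter, mem_Ioc, mem_range] at hp ⊢
        exact ⟨by omega, hp.2⟩
    _ ≤ 4 ^ n := primorial_le_four_pow n

theorem card_primes_Ioc_two_pow_mul_le (k : ℕ) :
    #{p ∈ Ioc (2 ^ k) (2 ^ (k + 1)) | p.Prime} * k ≤ 4 * 2 ^ k := by
  have h : 2 ^ (k * #{p ∈ Ioc (2 ^ k) (2 ^ (k + 1)) | p.Prime}) ≤ 2 ^ (4 * 2 ^ k) :=
    calc _ = (2 ^ k) ^ #{p ∈ Ioc (2 ^ k) (2 ^ (k + 1)) | p.Prime} := pow_mul ..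
      _ ≤ 4 ^ 2 ^ (k + 1) := pow_card_primes_Ioc_le ..
      _ = 2 ^ (4 * 2 ^ k) := by rw [show 4 = 2 ^ 2 by rfl, ← pow_mul]; ring
  rw [mul_comm]
  exact (Nat.pow_le_pow_iff_right one_lt_two).mp h

theorem sum_one_div_primes_Ioc_two_pow_le {k : ℕ} (hk : k ≠ 0) :
    ∑ p ∈ Ioc (2 ^ k : ℕ) (2 ^ (k + 1)) with p.Prime, (1 : ℝ) / p ≤ 4 / k := by
  set s := {p ∈ Ioc (2 ^ k : ℕ) (2 ^ (k + 1)) | p.Prime}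
  have hcard : (#s : ℝ) * k ≤ 4 * 2 ^ k := by exact_mod_cast card_primes_Ioc_two_pow_mul_le k
  calc ∑ p ∈ s, (1 : ℝ) / p ≤ #s • (1 / 2 ^ k : ℝ) := by
        refine sum_le_card_nsmul _ _ _ fun p hp ↦ ?_
        have : (2 : ℝ) ^ k < p := by exact_mod_cast (mem_Ioc.mp (mem_filter.mp hp).1).1
        gcongr
    _ ≤ 4 / k := by
        rw [nsmul_eq_mul, mul_one_div, div_le_div_iff₀ (by positivity) (by positivity)]
        linarith

theorem sum_one_div_primes_Ioc_one_two_pow_le (K : ℕ) :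
    ∑ p ∈ Ioc (1 : ℕ) (2 ^ (K + 1)) with p.Prime, (1 : ℝ) / p ≤ 1 / 2 + 4 * harmonic K := by
  have hdyadic := sum_Ioc_eq_sum_range_sum_Ioc (fun p : ℕ ↦ if p.Prime then (1 : ℝ) / p else 0)
    (pow_right_mono₀ one_le_two) (K + 1)
  simp only [← sum_filter, pow_zero] at hdyadic
  have hfirst : {p ∈ Ioc (2 ^ 0 : ℕ) (2 ^ (0 + 1)) | p.Prime} = {2} := by decide
  rw [hdyadic, sum_range_succ', hfirst, sum_singleton, add_comm]
  gcongr
  · norm_num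
  calc ∑ k ∈ range K, ∑ p ∈ Ioc (2 ^ (k + 1) : ℕ) (2 ^ (k + 1 + 1)) with p.Prime, (1 : ℝ) / p
      ≤ ∑ k ∈ range K, 4 / ((k + 1 : ℕ) : ℝ) :=
        sum_le_sum fun k _ ↦ sum_one_div_primes_Ioc_two_pow_le k.succ_ne_zero
    _ = 4 * harmonic K := by simp [harmonic, mul_sum, div_eq_mul_inv]

theorem sum_one_div_primes_le_one_add_log_natLog (n : ℕ) :
    ∑ p ∈ range (n + 1) with p.Prime, (1 : ℝ) / p ≤ 1 / 2 + 4 * (1 + log (Nat.log 2 n)) := by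
  have hsub : {p ∈ range (n + 1) | p.Prime} ⊆ {p ∈ Ioc 1 (2 ^ (Nat.log 2 n + 1)) | p.Prime} := by
    intro p hp
    simp only [mem_filter, mem_range, mem_Ioc] at hp ⊢
    have := Nat.lt_pow_succ_log_self one_lt_two n
    exact ⟨⟨hp.2.one_lt, by omega⟩, hp.2⟩
  calc _ ≤ ∑ p ∈ Ioc (1 : ℕ) (2 ^ (Nat.log 2 n + 1)) with p.Prime, (1 : ℝ) / p :=
        sum_le_sum_of_subset_of_nonneg hsub fun _ _ _ ↦ by positivity
    _ ≤ 1 / 2 + 4 * harmonic (Nat.log 2 n) := sum_one_div_primes_Ioc_one_two_pow_le _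
    _ ≤ 1 / 2 + 4 * (1 + log (Nat.log 2 n)) := by grw [harmonic_le_one_add_log]

theorem natLog_two_floor_le_two_mul_log {x : ℝ} (hx : 1 ≤ x) :
    (Nat.log 2 ⌊x⌋₊ : ℝ) ≤ 2 * log x := by
  have hn : (0 : ℝ) < ⌊x⌋₊ := by exact_mod_cast Nat.floor_pos.mpr hx
  calc (Nat.log 2 ⌊x⌋₊ : ℝ) ≤ logb 2 ⌊x⌋₊ := by exact_mod_cast natLog_le_logb _ _
    _ ≤ logb 2 x := logb_le_logb_of_le one_lt_two hn (Nat.floor_le (by linarith))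
    _ ≤ 2 * log x := by
        rw [logb, div_le_iff₀ (log_pos one_lt_two)]
        nlinarith [log_two_gt_d9, log_nonneg hx]

theorem one_div_twelve_le_log_log {x : ℝ} (hx : 3 ≤ x) : 1 / 12 ≤ log (log x) := by
  have hlog : 12 / 11 ≤ log x :=
    calc (12 / 11 : ℝ) ≤ log 3 := by linarith [log_three_gt_d9]
      _ ≤ log x := log_le_log (by norm_num) hx
  calc (1 / 12 : ℝ) = 1 - (12 / 11)⁻¹ := by norm_num
    _ ≤ 1 - (log x)⁻¹ := by gcongr
    _ ≤ log (log x) := one_sub_inv_le_log_of_pos (by linarith)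

/-- There exists a constant `C > 0` such that for all real `x ≥ 3`, the sum of the reciprocals of
the primes `p ≤ x` satisfies `Σ_{p ≤ x, p prime} 1/p ≤ C · ln ln x`. -/
theorem sum_one_div_primes_upper_bound :
    ∃ C : ℝ, 0 < C ∧ ∀ x : ℝ, 3 ≤ x →
      ∑ p ∈ Finset.filter Nat.Prime (Finset.range (⌊x⌋₊ + 1)), (1 : ℝ) / p ≤
        C * Real.log (Real.log x) := by
  refine ⟨100, by norm_num, fun x hx ↦ ?_⟩
  have hK : 0 < Nat.log 2 ⌊x⌋₊ := Nat.log_pos one_lt_two (Nat.le_floor (by norm_num; linarith))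
  have hlogK : log (Nat.log 2 ⌊x⌋₊) ≤ log 2 + log (log x) := by
    rw [← log_mul two_ne_zero (log_pos (by linarith)).ne']
    exact log_le_log (by exact_mod_cast hK) (natLog_two_floor_le_two_mul_log (by linarith))
  calc _ ≤ 1 / 2 + 4 * (1 + log (Nat.log 2 ⌊x⌋₊)) :=
        sum_one_div_primes_le_one_add_log_natLog ⌊x⌋₊
    _ ≤ 100 * log (log x) := by linarith [log_two_lt_d9, one_div_twelve_le_log_log hx]
end

section
/- There exists a constant C > 0 such that for all real x ≥ 2, Σ_{p ≤ x, p prime} 1/ln p ≤ C · x / (ln x)^2. -/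
/-!
Split the primes `p ≤ x` at `√x`. There are at most `√x` small primes, each contributing at most
`1 / log 2`. A large prime has `log x ≤ 2 log p`, so `1 / log p ≤ 4 log p / (log x)²`, and
these terms add up to at most `4 θ(x) / (log x)²` with Chebyshev's `θ(x) ≤ x log 4`.
Finally `√x ≤ 16 x / (log x)²`, since `log x ≤ 4 x^(1/4)`.
-/

open Real Finset Chebyshev
open Nat (primesLE mem_primesLE primesLE_eq_filter_range primesLE_eq_filter_Ioc_zero)

lemma log_sq_le_sixteen_mul_sqrt {x : ℝ} (hx : 1 ≤ x) : log x ^ 2 ≤ 16 * √x := by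
  have hx0 : 0 ≤ x := by linarith
  have hlog : log x ≤ 4 * x ^ (1 / 4 : ℝ) := by
    have := log_le_rpow_div hx0 (by norm_num : (0 : ℝ) < 1 / 4)
    linarith [show x ^ (1 / 4 : ℝ) / (1 / 4) = 4 * x ^ (1 / 4 : ℝ) by ring]
  calc log x ^ 2 ≤ (4 * x ^ (1 / 4 : ℝ)) ^ 2 := by gcongr; exact log_nonneg hx
    _ = 16 * √x := by
      rw [mul_pow, ← rpow_mul_natCast hx0, sqrt_eq_rpow]
      norm_num

lemma sqrt_le_sixteen_mul_div_log_sq {x : ℝ} (hx : 1 < x) : √x ≤ 16 * x / log x ^ 2 := by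
  have hlog : 0 < log x := log_pos hx
  rw [le_div_iff₀ (by positivity)]
  calc √x * log x ^ 2 ≤ √x * (16 * √x) := by gcongr; exact log_sq_le_sixteen_mul_sqrt hx.le
    _ = 16 * x := by rw [mul_left_comm, mul_self_sqrt (by linarith)]

lemma card_primesLE_le (n : ℕ) : #(primesLE n) ≤ n :=
  (card_le_card (primesLE_eq_filter_Ioc_zero n ▸ filter_subset _ _)).trans_eq (Nat.card_Ioc 0 n)

lemma sum_one_div_log_primesLE_le {y : ℝ} (hy : 0 ≤ y) :
    ∑ p ∈ primesLE ⌊y⌋₊, 1 / log p ≤ y / log 2 := by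
  have hterm : ∀ p ∈ primesLE ⌊y⌋₊, 1 / log (p : ℝ) ≤ 1 / log 2 := fun p hp => by
    have hp : (2 : ℝ) ≤ p := by exact_mod_cast Nat.two_le_of_mem_primesLE hp
    gcongr
  calc ∑ p ∈ primesLE ⌊y⌋₊, 1 / log p ≤ #(primesLE ⌊y⌋₊) • (1 / log 2) :=
        sum_le_card_nsmul _ _ _ hterm
    _ ≤ y / log 2 := by
      rw [nsmul_eq_mul, mul_one_div]
      gcongr
      exact (Nat.cast_le.2 (card_primesLE_le _)).trans (Nat.floor_le hy)

lemma one_div_log_le_log_div_log_sq {y p : ℝ} (hy : 1 < y) (hyp : y < p) :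
    1 / log p ≤ log p / log y ^ 2 := by
  have hlogy : 0 < log y := log_pos hy
  have hlog : log y < log p := log_lt_log (by linarith) hyp
  rw [div_le_div_iff₀ (by linarith) (by positivity)]
  nlinarith

theorem sum_one_div_log_primesLE_le_add_theta {x y : ℝ} (hy : 1 < y) :
    ∑ p ∈ primesLE ⌊x⌋₊, 1 / log p ≤ y / log 2 + θ x / log y ^ 2 := by
  have hnonneg (p : ℕ) : 0 ≤ 1 / log (p : ℝ) := one_div_nonneg.2 (log_natCast_nonneg p)
  have hsmall : ∑ p ∈ primesLE ⌊x⌋₊ with p ≤ ⌊y⌋₊, 1 / log p ≤ y / log 2 := by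
    refine le_trans (sum_le_sum_of_subset_of_nonneg (fun p hp => ?_) fun p _ _ => hnonneg p)
      (sum_one_div_log_primesLE_le (by linarith))
    rw [mem_filter, mem_primesLE] at hp
    exact mem_primesLE.2 ⟨hp.2, hp.1.2⟩
  have hlarge : ∑ p ∈ primesLE ⌊x⌋₊ with ¬ p ≤ ⌊y⌋₊, 1 / log p ≤ θ x / log y ^ 2 := by
    rw [theta_eq_sum_primesLE, sum_div]
    refine le_trans (sum_le_sum fun p hp => ?_) (sum_le_sum_of_subset_of_nonneg
      (filter_subset _ _) fun p _ _ => div_nonneg (log_natCast_nonneg p) (sq_nonneg _))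
    exact one_div_log_le_log_div_log_sq hy (Nat.lt_of_floor_lt (not_le.1 (mem_filter.1 hp).2))
  rw [← sum_filter_add_sum_filter_not _ (· ≤ ⌊y⌋₊)]
  exact add_le_add hsmall hlarge

/-- There exists a constant `C > 0` such that for all real `x ≥ 2`,
`Σ_{p ≤ x, p prime} 1/ln p ≤ C · x / (ln x)^2`. -/
theorem sum_one_div_log_primes_upper_bound :
    ∃ C : ℝ, 0 < C ∧ ∀ x : ℝ, 2 ≤ x →
      ∑ p ∈ Finset.filter Nat.Prime (Finset.range (⌊x⌋₊ + 1)), 1 / Real.log p ≤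
        C * x / (Real.log x) ^ 2 := by
  refine ⟨16 / log 2 + 4 * log 4, by positivity, fun x hx => ?_⟩
  have hx0 : 0 < x := by linarith
  have hsqrt : 1 < √x := by rw [lt_sqrt zero_le_one]; linarith
  rw [← primesLE_eq_filter_range]
  calc ∑ p ∈ primesLE ⌊x⌋₊, 1 / log p ≤ √x / log 2 + θ x / log √x ^ 2 :=
        sum_one_div_log_primesLE_le_add_theta hsqrt
    _ ≤ 16 * x / log x ^ 2 / log 2 + log 4 * x / (log x / 2) ^ 2 := by
      rw [log_sqrt hx0.le]
      gcongr
      · exact sqrt_le_sixteen_mul_div_log_sq (by linarith)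
      · exact theta_le_log4_mul_x hx0.le
    _ = (16 / log 2 + 4 * log 4) * x / log x ^ 2 := by
      field_simp
      ring
end

section
/- There exists a constant C > 0 such that for all real x ≥ 2, the double sum Σ_{n ≥ 2} Σ_{p prime, p^(n+1) ≤ x} 1/(p^n · ln(x/p^n)) is at most C / ln x. -/
private lemma aux_nat_le_geom : ∀ n : ℕ, (n : ℝ) + 1 ≤ 2 * (3/2)^n := by
  intro n
  induction n with
  | zero => norm_num
  | succ m ih =>
    have h1 : (1:ℝ) ≤ (3/2:ℝ)^m := one_le_pow₀ (by norm_num)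
    push_cast
    rw [pow_succ]
    nlinarith

private lemma aux_geom_sum (N : ℕ) : ∑ n ∈ Finset.range N, (8:ℝ) * (3/4)^n ≤ 32 := by
  rw [← Finset.mul_sum]
  have : ∑ n ∈ Finset.range N, ((3:ℝ)/4)^n ≤ 4 := by
    rw [geom_sum_eq (by norm_num)]
    have h : (0:ℝ) ≤ (3/4:ℝ)^N := by positivity
    have h2 : ((3:ℝ)/4)^N ≤ 1 := pow_le_one₀ (by norm_num) (by norm_num)
    rw [div_le_iff_of_neg (by norm_num)]
    linarith
  linarith

private lemma aux_sq_sum : ∀ N : ℕ, ∑ m ∈ Finset.range N, 1/(m:ℝ)^2 ≤ 2 := by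
  have key : ∀ N : ℕ, 1 ≤ N → ∑ m ∈ Finset.range (N+1), 1/(m:ℝ)^2 ≤ 2 - 1/(N:ℝ) := by
    intro N hN
    induction N with
    | zero => omega
    | succ M ih =>
      rcases Nat.eq_or_lt_of_le hN with h | h
      · simp [← h]
        norm_num [Finset.sum_range_succ]
      · have hM : 1 ≤ M := by omega
        have hMpos : (0:ℝ) < M := by positivity
        have hM1pos : (0:ℝ) < (M:ℝ) + 1 := by positivity
        rw [Finset.sum_range_succ]
        have step : 1/((M:ℝ)+1)^2 ≤ 1/(M:ℝ) - 1/((M:ℝ)+1) := by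
          rw [div_sub_div _ _ (ne_of_gt hMpos) (ne_of_gt hM1pos)]
          rw [div_le_div_iff₀ (by positivity) (by positivity)]
          ring_nf
          nlinarith
        have := ih hM
        push_cast
        push_cast at this
        linarith
  intro N
  match N with
  | 0 => simp
  | 1 => simp
  | (M+2) =>
    have := key (M+1) (by omega)
    have hpos : (0:ℝ) < (M:ℝ)+1 := by positivity
    have : ∑ m ∈ Finset.range (M+2), 1/(m:ℝ)^2 ≤ 2 - 1/((M:ℝ)+1) := by
      convert this using 2
      push_cast
      ring
    have h2 : (0:ℝ) < 1/((M:ℝ)+1) := by positivity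
    linarith

open Classical in
/-- There exists a constant `C > 0` such that for all real `x ≥ 2`, the double sum
`Σ_{n ≥ 2} Σ_{p prime, p^(n+1) ≤ x} 1/(p^n · ln(x/p^n))` is at most `C / ln x`. -/
theorem double_sum_prime_powers_upper_bound :
    ∃ C : ℝ, 0 < C ∧ ∀ x : ℝ, 2 ≤ x →
      ∑ q ∈ Finset.filter
          (fun q : ℕ × ℕ => 2 ≤ q.1 ∧ q.2.Prime ∧ ((q.2 : ℝ)) ^ (q.1 + 1) ≤ x)
          (Finset.range (⌊x⌋₊ + 1) ×ˢ Finset.range (⌊x⌋₊ + 1)),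
        1 / ((q.2 : ℝ) ^ q.1 * Real.log (x / (q.2 : ℝ) ^ q.1)) ≤
        C / Real.log x := by
  refine ⟨64, by norm_num, fun x hx => ?_⟩
  have hL : 0 < Real.log x := Real.log_pos (by linarith)
  set B := Finset.range (⌊x⌋₊ + 1) with hB
  set S := Finset.filter
      (fun q : ℕ × ℕ => 2 ≤ q.1 ∧ q.2.Prime ∧ ((q.2 : ℝ)) ^ (q.1 + 1) ≤ x) (B ×ˢ B) with hS
  -- pointwise bound
  have key : ∀ q ∈ S, 1 / ((q.2 : ℝ) ^ q.1 * Real.log (x / (q.2 : ℝ) ^ q.1)) ≤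
      (8 * (3/4:ℝ)^q.1 * (1/(q.2:ℝ)^2)) * (1 / Real.log x) := by
    rintro ⟨n, p⟩ hq
    obtain ⟨-, hn, hp, hxle⟩ := Finset.mem_filter.mp hq
    simp only at hn hp hxle ⊢
    have hp2 : (2:ℝ) ≤ (p:ℝ) := by exact_mod_cast hp.two_le
    have hppos : (0:ℝ) < p := by linarith
    have hPpos : (0:ℝ) < (p:ℝ)^n := pow_pos hppos n
    have hn1pos : (0:ℝ) < (n:ℝ) + 1 := by positivity
    -- log bound
    have hle : ((n:ℝ)+1) * Real.log p ≤ Real.log x := by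
      have := Real.log_le_log (by positivity) hxle
      rwa [Real.log_pow, Nat.cast_add, Nat.cast_one] at this
    have hD : Real.log (x / (p:ℝ)^n) = Real.log x - n * Real.log p := by
      rw [Real.log_div (by linarith) (ne_of_gt hPpos), Real.log_pow]
    have hD_ge : Real.log x / ((n:ℝ)+1) ≤ Real.log (x / (p:ℝ)^n) := by
      rw [hD, div_le_iff₀ hn1pos]
      have hmul := mul_le_mul_of_nonneg_left hle (Nat.cast_nonneg n : (0:ℝ) ≤ n)
      nlinarith
    have hDpos : 0 < Real.log (x / (p:ℝ)^n) :=
      lt_of_lt_of_le (by positivity) hD_ge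
    -- step 1
    have step1 : 1 / ((p:ℝ)^n * Real.log (x / (p:ℝ)^n)) ≤
        ((n:ℝ)+1) / ((p:ℝ)^n * Real.log x) := by
      rw [div_le_div_iff₀ (by positivity) (by positivity)]
      have hL2 : Real.log x ≤ Real.log (x / (p:ℝ)^n) * ((n:ℝ)+1) :=
        (div_le_iff₀ hn1pos).mp hD_ge
      nlinarith [mul_le_mul_of_nonneg_left hL2 hPpos.le]
    -- step 2 : (n+1)/p^n ≤ 8(3/4)^n / p^2
    have step2 : ((n:ℝ)+1) / (p:ℝ)^n ≤ 8 * (3/4:ℝ)^n * (1/(p:ℝ)^2) := by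
      have hpow : (2:ℝ)^(n-2) * (p:ℝ)^2 ≤ (p:ℝ)^n := by
        have : (p:ℝ)^n = (p:ℝ)^(n-2) * (p:ℝ)^2 := by
          rw [← pow_add]; congr 1; omega
        rw [this]
        have := pow_le_pow_left₀ (by norm_num : (0:ℝ) ≤ 2) hp2 (n-2)
        nlinarith
      have hnum := aux_nat_le_geom n
      have h1 : ((n:ℝ)+1) / (p:ℝ)^n ≤ (2 * (3/2:ℝ)^n) / ((2:ℝ)^(n-2) * (p:ℝ)^2) := by
        apply div_le_div₀ (by positivity) hnum (by positivity) hpow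
      refine h1.trans (le_of_eq ?_)
      have h2 : ((2:ℝ))^(n-2) = 2^n / 4 := by
        rw [eq_div_iff (by norm_num : (4:ℝ) ≠ 0),
          show (4:ℝ) = 2^2 by norm_num, ← pow_add]
        congr 1
        omega
      have h4 : ((3:ℝ)/2)^n / 2^n = (3/4)^n := by
        rw [← div_pow]
        norm_num
      rw [h2, ← h4]
      have hb : ((2:ℝ)^n) ≠ 0 := by positivity
      have hpne : ((p:ℝ)^2) ≠ 0 := by positivity
      field_simp
      ring
    -- combine
    calc 1 / ((p:ℝ)^n * Real.log (x / (p:ℝ)^n))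
        ≤ ((n:ℝ)+1) / ((p:ℝ)^n * Real.log x) := step1
      _ = (((n:ℝ)+1) / (p:ℝ)^n) * (1 / Real.log x) := by ring
      _ ≤ (8 * (3/4:ℝ)^n * (1/(p:ℝ)^2)) * (1 / Real.log x) := by
          apply mul_le_mul_of_nonneg_right step2 (by positivity)
  calc ∑ q ∈ S, 1 / ((q.2 : ℝ) ^ q.1 * Real.log (x / (q.2 : ℝ) ^ q.1))
      ≤ ∑ q ∈ S, (8 * (3/4:ℝ)^q.1 * (1/(q.2:ℝ)^2)) * (1 / Real.log x) :=
        Finset.sum_le_sum key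
    _ ≤ ∑ q ∈ B ×ˢ B, (8 * (3/4:ℝ)^q.1 * (1/(q.2:ℝ)^2)) * (1 / Real.log x) := by
        apply Finset.sum_le_sum_of_subset_of_nonneg (Finset.filter_subset _ _)
        intro q _ _
        positivity
    _ = (∑ n ∈ B, 8 * (3/4:ℝ)^n) * (∑ m ∈ B, 1/(m:ℝ)^2) * (1 / Real.log x) := by
        rw [Finset.sum_product, Finset.sum_mul, Finset.sum_mul]
        refine Finset.sum_congr rfl fun n _ => ?_
        rw [Finset.mul_sum, Finset.sum_mul]
    _ ≤ 32 * 2 * (1 / Real.log x) := by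
        have h1 := aux_geom_sum (⌊x⌋₊ + 1)
        have h2 := aux_sq_sum (⌊x⌋₊ + 1)
        have hg : (0:ℝ) ≤ ∑ n ∈ B, 8 * (3/4:ℝ)^n :=
          Finset.sum_nonneg fun n _ => by positivity
        have hs : (0:ℝ) ≤ ∑ m ∈ B, 1/(m:ℝ)^2 :=
          Finset.sum_nonneg fun m _ => by positivity
        have hLinv : (0:ℝ) ≤ 1 / Real.log x := by positivity
        apply mul_le_mul_of_nonneg_right _ hLinv
        calc (∑ n ∈ B, 8 * (3/4:ℝ)^n) * (∑ m ∈ B, 1/(m:ℝ)^2)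
            ≤ 32 * (∑ m ∈ B, 1/(m:ℝ)^2) := mul_le_mul_of_nonneg_right h1 hs
          _ ≤ 32 * 2 := mul_le_mul_of_nonneg_left h2 (by norm_num)
    _ = 64 / Real.log x := by ring
end
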